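/- arXiv:1603.07005 — 8 statements merged into one kernel-verified Lean document; each statement's English description precedes it below -/
import Mathlib

section
/- Let A be an n×n real symmetric matrix and X a vector in ℝⁿ. Then the function t ↦ σ_k(A - t·X⊗X) is an affine (degree ≤ 1 polynomial) function of t, where σ_k denotes the k-th elementary symmetric polynomial of the eigenvalues and X⊗X is the rank-one matrix with entries XᵢXⱼ. -/
open Matrix

/-- Rank-one determinant expansion: `det (N + c • vecMulVec u v)` is affine in `c`,
over any commutative ring. -/
lemma det_add_smul_vecMulVec {R : Type*} [CommRing R] {n : ℕ}
    (N : Matrix (Fin n) (Fin n) R) (u v : Fin n → R) (c : R) :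
    det (N + c • Matrix.vecMulVec u v) =
      det N + c * ∑ i, u i * det (N.updateRow i v) := by
  classical
  set f := Matrix.detRowAlternating (R := R) (n := Fin n) with hf
  set P : Fin n → Fin n → R := fun i => (c * u i) • v with hP
  have hMat : (N + c • Matrix.vecMulVec u v) = fun i => P i + N i := by
    ext i j
    simp [hP, Matrix.vecMulVec_apply, mul_assoc, add_comm]
  have hdet : det (N + c • Matrix.vecMulVec u v)
      = ∑ s : Finset (Fin n), f (s.piecewise P N) := by
    rw [show det (N + c • Matrix.vecMulVec u v) = f (N + c • Matrix.vecMulVec u v) from rfl]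
    rw [show ((N + c • Matrix.vecMulVec u v) : Matrix (Fin n) (Fin n) R)
        = (P + fun i => N i) from by ext i j; simpa using congrFun (congrFun hMat i) j]
    exact f.toMultilinearMap.map_add_univ P fun i => N i
  -- terms with at least two replaced rows vanish
  have hzero : ∀ s : Finset (Fin n), 1 < s.card → f (s.piecewise P N) = 0 := by
    intro s hs
    obtain ⟨i, his, j, hjs, hij⟩ := Finset.one_lt_card.mp hs
    set g := s.piecewise P N with hg
    have hgi : g i = (c * u i) • v := by rw [hg]; exact Finset.piecewise_eq_of_mem _ _ _ his
    have hgj : g j = (c * u j) • v := by rw [hg]; exact Finset.piecewise_eq_of_mem _ _ _ hjs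
    have h1 : f g = (c * u i) • f (Function.update g i v) := by
      conv_lhs => rw [← Function.update_eq_self i g, hgi]
      exact f.map_update_smul g i (c * u i) v
    have hg1j : Function.update g i v j = (c * u j) • v := by
      rw [Function.update_of_ne (Ne.symm hij)]
      exact hgj
    have h2 : f (Function.update g i v) =
        (c * u j) • f (Function.update (Function.update g i v) j v) := by
      conv_lhs => rw [← Function.update_eq_self j (Function.update g i v), hg1j]
      exact f.map_update_smul _ j (c * u j) v
    have h3 : f (Function.update (Function.update g i v) j v) = 0 := by
      apply f.map_eq_zero_of_eq _ (i := i) (j := j) _ hij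
      rw [Function.update_of_ne hij, Function.update_self, Function.update_self]
    rw [h1, h2, h3, smul_zero, smul_zero]
  -- the surviving terms: the empty set and singletons
  have hsum : ∑ s : Finset (Fin n), f (s.piecewise P N)
      = f N + ∑ i : Fin n, f (Function.update N i (P i)) := by
    have hT : (insert (∅ : Finset (Fin n)) (Finset.univ.image fun i : Fin n => ({i} : Finset (Fin n))))
        ⊆ Finset.univ := Finset.subset_univ _
    rw [← Finset.sum_subset hT]
    · rw [Finset.sum_insert (by
        simp only [Finset.mem_image, Finset.mem_univ, true_and]
        rintro ⟨i, hi⟩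
        exact Finset.singleton_ne_empty i hi),
        Finset.piecewise_empty (f := P) (g := fun i => N i),
        Finset.sum_image (fun a _ b _ h => by simpa using Finset.singleton_injective h)]
      congr 1
      exact Finset.sum_congr rfl fun i _ => by rw [Finset.piecewise_singleton (f := P) (g := fun i => N i)]
    · intro s _ hs
      apply hzero
      rcases Nat.lt_or_ge 1 s.card with h | h
      · exact h
      · exfalso
        interval_cases h' : s.card
        · exact hs (by simp [Finset.card_eq_zero.mp h'])
        · obtain ⟨i, hi⟩ := Finset.card_eq_one.mp h'
          exact hs (by simp [hi])
  have hterm : ∀ i, f (Function.update N i (P i)) = c * (u i * det (N.updateRow i v)) := by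
    intro i
    have : f (Function.update N i ((c * u i) • v)) = (c * u i) • f (Function.update N i v) :=
      f.map_update_smul N i (c * u i) v
    rw [hP, this, show Function.update N i v = N.updateRow i v from rfl]
    show (c * u i) * det (N.updateRow i v) = _
    ring
  rw [hdet, hsum]
  have : f N = det N := rfl
  rw [this, Finset.sum_congr rfl fun i _ => hterm i, ← Finset.mul_sum]

/-- The k-th elementary symmetric polynomial of the eigenvalues of an n×n matrix,
defined via the coefficients of the characteristic polynomial (equivalently, the
sum of all k×k principal minors); it is `0` for `k > n`. -/
noncomputable def esymm {n : ℕ} (k : ℕ) (A : Matrix (Fin n) (Fin n) ℝ) : ℝ :=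
  if k ≤ n then (-1 : ℝ) ^ k * (Matrix.charpoly A).coeff (n - k) else 0

/-- The function `t ↦ σ_k(A - t·X⊗X)` is affine in `t`. -/
theorem sigma_k_affine_in_rank_one {n : ℕ} (k : ℕ) (A : Matrix (Fin n) (Fin n) ℝ)
    (hA : A.IsSymm) (X : Fin n → ℝ) :
    ∃ a b : ℝ, ∀ t : ℝ, esymm k (A - t • Matrix.vecMulVec X X) = a + b * t := by
  classical
  set u : Fin n → Polynomial ℝ := fun i => Polynomial.C (X i) with hu
  set q : Polynomial ℝ :=
    ∑ i, u i * det ((charmatrix A).updateRow i u) with hq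
  have key : ∀ t : ℝ, (A - t • Matrix.vecMulVec X X).charpoly
      = A.charpoly + Polynomial.C t * q := by
    intro t
    have hcm : charmatrix (A - t • Matrix.vecMulVec X X)
        = charmatrix A + Polynomial.C t • Matrix.vecMulVec u u := by
      ext i j
      by_cases h : i = j <;>
        simp [h, charmatrix_apply, Matrix.vecMulVec_apply, hu, _root_.map_mul, map_sub,
          mul_comm, mul_left_comm, mul_assoc, sub_eq_add_neg, add_comm, add_left_comm] <;> ring
    rw [Matrix.charpoly, hcm, det_add_smul_vecMulVec, ← Matrix.charpoly, ← hq]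
  refine ⟨(if k ≤ n then (-1 : ℝ) ^ k * A.charpoly.coeff (n - k) else 0),
    (if k ≤ n then (-1 : ℝ) ^ k * q.coeff (n - k) else 0), fun t => ?_⟩
  unfold esymm
  by_cases hk : k ≤ n
  · simp only [hk, if_pos, key t, Polynomial.coeff_add, Polynomial.coeff_C_mul]
    ring
  · simp [hk]
end

section
/- Let A be an n×n real symmetric matrix, X ∈ ℝⁿ, and k ≥ 1. Then σ_k(A - X⊗X) = σ_k(A) - ⟨T_{k-1}(A), X⊗X⟩, where T_{k-1} is the (k-1)-st Newton transform and ⟨·,·⟩ is the Frobenius inner product. -/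
open Matrix

/-- The k-th Newton transform: `T_0(A) = I`, `T_k(A) = σ_k(A)·I − A·T_{k-1}(A)`. -/
noncomputable def newton {n : ℕ} : ℕ → Matrix (Fin n) (Fin n) ℝ → Matrix (Fin n) (Fin n) ℝ
  | 0, _ => 1
  | k + 1, A => esymm (k + 1) A • (1 : Matrix (Fin n) (Fin n) ℝ) - A * newton k A

lemma charpoly_coeff_self {n : ℕ} (A : Matrix (Fin n) (Fin n) ℝ) : A.charpoly.coeff n = 1 := by
  have hd : A.charpoly.natDegree = n := by simpa using A.charpoly_natDegree_eq_dim
  have := A.charpoly_monic.coeff_natDegree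
  rwa [hd] at this

lemma newton_closed {n : ℕ} (A : Matrix (Fin n) (Fin n) ℝ) :
    ∀ k, k ≤ n → ((-1 : ℝ) ^ k) • newton k A
      = ∑ j ∈ Finset.range (k + 1), A.charpoly.coeff (n - k + j) • A ^ j := by
  intro k
  induction k with
  | zero =>
    intro _
    simp [newton, esymm, charpoly_coeff_self]
  | succ k ih =>
    intro hk
    have hk' : k ≤ n := Nat.le_of_succ_le hk
    have ihk := ih hk'
    rw [show newton (k+1) A = esymm (k+1) A • (1 : Matrix (Fin n) (Fin n) ℝ) - A * newton k A from rfl]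
    have he : esymm (k+1) A = (-1:ℝ)^(k+1) * A.charpoly.coeff (n - (k+1)) := by
      rw [esymm, if_pos hk]
    have hne : ((-1:ℝ)^(k+1)) * ((-1:ℝ)^(k+1)) = 1 := by
      rw [← pow_add]; exact Even.neg_one_pow ⟨k+1, by ring⟩
    rw [smul_sub, smul_smul, he, ← mul_assoc, hne, one_mul]
    have hma : ((-1:ℝ)^(k+1)) • (A * newton k A) = -(A * ((-1:ℝ)^k • newton k A)) := by
      rw [Matrix.mul_smul, pow_succ, mul_comm, neg_one_mul, neg_smul]
    rw [hma, sub_neg_eq_add, ihk, Finset.mul_sum]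
    rw [Finset.sum_range_succ' (fun j => A.charpoly.coeff (n - (k+1) + j) • A ^ j) (k+1),
      add_comm (A.charpoly.coeff (n - (k+1)) • (1 : Matrix (Fin n) (Fin n) ℝ))]
    congr 1
    · refine Finset.sum_congr rfl fun j hj => ?_
      have hj' := Finset.mem_range.1 hj
      have hidx : n - k + j = n - (k+1) + (j+1) := by omega
      rw [Matrix.mul_smul, ← pow_succ', hidx]

lemma newton_dim {n : ℕ} (A : Matrix (Fin n) (Fin n) ℝ) : newton n A = 0 := by
  have h := newton_closed A n le_rfl
  have hd : A.charpoly.natDegree = n := by simpa using A.charpoly_natDegree_eq_dim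
  have haev : (Polynomial.aeval A) A.charpoly = 0 := A.aeval_self_charpoly
  rw [Polynomial.aeval_eq_sum_range, hd] at haev
  simp only [Nat.sub_self, Nat.zero_add] at h
  have : ((-1:ℝ)^n) • newton n A = 0 := by
    rw [h]
    rw [← haev]
  have hne : ((-1:ℝ)^n) ≠ 0 := by positivity
  exact (smul_eq_zero.mp this).resolve_left hne

lemma newton_ge {n : ℕ} (A : Matrix (Fin n) (Fin n) ℝ) {m : ℕ} (hm : n ≤ m) :
    newton m A = 0 := by
  induction m with
  | zero => exact Nat.le_zero.mp hm ▸ newton_dim A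
  | succ m ih =>
    rcases Nat.lt_or_ge n (m+1) with h | h
    · have hn : n ≤ m := Nat.lt_succ_iff.mp h
      have he : esymm (m+1) A = 0 := by
        rw [esymm, if_neg (by omega)]
      rw [show newton (m+1) A = esymm (m+1) A • (1 : Matrix (Fin n) (Fin n) ℝ) - A * newton m A from rfl,
        he, ih hn, zero_smul, Matrix.mul_zero, sub_zero]
    · have : n = m + 1 := le_antisymm hm h
      exact this ▸ newton_dim A

/-- `M_i = ((-1)^i T_i(A)).map C` -/
noncomputable def Mi {n : ℕ} (A : Matrix (Fin n) (Fin n) ℝ) (i : ℕ) :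
    Matrix (Fin n) (Fin n) (Polynomial ℝ) :=
  (((-1:ℝ)^i • newton i A)).map Polynomial.C

lemma smul_map_C {n : ℕ} (r : ℝ) (M : Matrix (Fin n) (Fin n) ℝ) :
    (r • M).map Polynomial.C = Polynomial.C r • M.map Polynomial.C := by
  ext i j
  simp [Matrix.map_apply]

lemma charmatrix_eq {n : ℕ} (A : Matrix (Fin n) (Fin n) ℝ) :
    charmatrix A = (Polynomial.X : Polynomial ℝ) • (1 : Matrix (Fin n) (Fin n) (Polynomial ℝ))
      - A.map Polynomial.C := by
  ext i j
  by_cases h : i = j <;>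
    simp [charmatrix_apply, Matrix.one_apply, h, Matrix.diagonal_apply]

lemma key_partial {n : ℕ} (A : Matrix (Fin n) (Fin n) ℝ) :
    ∀ k, k ≤ n → charmatrix A * (∑ i ∈ Finset.range k, (Polynomial.X : Polynomial ℝ)^(k-1-i) • Mi A i)
      = (∑ j ∈ Finset.range (k+1), Polynomial.C ((-1:ℝ)^j * esymm j A) * Polynomial.X^(k-j))
          • (1 : Matrix (Fin n) (Fin n) (Polynomial ℝ)) - Mi A k := by
  intro k
  induction k with
  | zero =>
    intro _
    have he : esymm 0 A = 1 := by simp [esymm, charpoly_coeff_self]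
    simp [Mi, newton, he]
  | succ k ih =>
    intro hk
    have hk' : k ≤ n := Nat.le_of_succ_le hk
    have ihk := ih hk'
    -- split off last term of S
    rw [Finset.sum_range_succ]
    have hS : ∑ i ∈ Finset.range k, (Polynomial.X : Polynomial ℝ)^(k+1-1-i) • Mi A i
        = (Polynomial.X : Polynomial ℝ) • ∑ i ∈ Finset.range k, (Polynomial.X : Polynomial ℝ)^(k-1-i) • Mi A i := by
      rw [Finset.smul_sum]
      refine Finset.sum_congr rfl fun i hi => ?_
      have hi' := Finset.mem_range.1 hi
      rw [smul_smul, ← pow_succ']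
      congr 2
      omega
    rw [hS]
    simp only [show k+1-1-k = 0 from by omega, pow_zero, one_smul]
    rw [Matrix.mul_add, mul_smul_comm, ihk]
    -- compute charmatrix A * Mi A k
    have hAM : charmatrix A * Mi A k
        = (Polynomial.X : Polynomial ℝ) • Mi A k - (Polynomial.C ((-1:ℝ)^k * esymm (k+1) A)
            • (1 : Matrix (Fin n) (Fin n) (Polynomial ℝ)) + Mi A (k+1)) := by
      rw [charmatrix_eq, sub_mul, smul_mul_assoc, one_mul]
      congr 1
      have hrec : A * ((-1:ℝ)^k • newton k A)
          = ((-1:ℝ)^k * esymm (k+1) A) • (1 : Matrix (Fin n) (Fin n) ℝ)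
            + (-1:ℝ)^(k+1) • newton (k+1) A := by
        rw [show newton (k+1) A = esymm (k+1) A • (1 : Matrix (Fin n) (Fin n) ℝ) - A * newton k A from rfl]
        rw [Matrix.mul_smul]
        module
      calc (A.map Polynomial.C) * Mi A k
          = (A * ((-1:ℝ)^k • newton k A)).map Polynomial.C := by
            rw [Mi, Matrix.map_mul]
        _ = _ := by
            rw [hrec]
            ext i j
            by_cases h : i = j <;>
              simp [Mi, Matrix.map_apply, Matrix.one_apply, h]
    rw [hAM]
    -- now pure algebra
    have hq : (∑ j ∈ Finset.range (k+1+1), Polynomial.C ((-1:ℝ)^j * esymm j A) * Polynomial.X^(k+1-j))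
        = Polynomial.X * (∑ j ∈ Finset.range (k+1), Polynomial.C ((-1:ℝ)^j * esymm j A) * Polynomial.X^(k-j))
          + Polynomial.C ((-1:ℝ)^(k+1) * esymm (k+1) A) := by
      rw [Finset.sum_range_succ, Finset.mul_sum]
      congr 1
      · refine Finset.sum_congr rfl fun j hj => ?_
        have hj' := Finset.mem_range.1 hj
        rw [← mul_assoc, mul_comm Polynomial.X, mul_assoc, ← pow_succ']
        congr 2
        omega
      · simp
    rw [hq]
    have hc : (Polynomial.C ((-1:ℝ)^(k+1) * esymm (k+1) A))
        = -(Polynomial.C ((-1:ℝ)^k * esymm (k+1) A)) := by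
      rw [← map_neg]
      congr 1
      ring
    rw [hc]
    module

lemma charpoly_eq_q {n : ℕ} (A : Matrix (Fin n) (Fin n) ℝ) :
    (∑ j ∈ Finset.range (n+1), Polynomial.C ((-1:ℝ)^j * esymm j A) * Polynomial.X^(n-j))
      = A.charpoly := by
  have hd : A.charpoly.natDegree = n := by simpa using A.charpoly_natDegree_eq_dim
  have h1 : ∀ j, j ∈ Finset.range (n+1) →
      Polynomial.C ((-1:ℝ)^j * esymm j A) * Polynomial.X^(n-j)
        = Polynomial.C (A.charpoly.coeff (n-j)) * Polynomial.X^(n-j) := by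
    intro j hj
    have hj' := Finset.mem_range.1 hj
    congr 1
    rw [esymm, if_pos (by omega), ← mul_assoc, ← pow_add]
    rw [Even.neg_one_pow ⟨j, by ring⟩, one_mul]
  rw [Finset.sum_congr rfl h1, ← Finset.sum_range_reflect]
  have h2 : ∀ j, j ∈ Finset.range (n+1) →
      Polynomial.C (A.charpoly.coeff (n - (n + 1 - 1 - j))) * Polynomial.X ^ (n - (n + 1 - 1 - j))
        = Polynomial.C (A.charpoly.coeff j) * Polynomial.X ^ j := by
    intro j hj
    have hj' := Finset.mem_range.1 hj
    have e1 : n - (n + 1 - 1 - j) = j := by omega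
    rw [e1]
  rw [Finset.sum_congr rfl h2]
  simp only [Polynomial.C_mul_X_pow_eq_monomial]
  exact (A.charpoly.as_sum_range' (n+1) (by omega)).symm

lemma key_adjugate {n : ℕ} (A : Matrix (Fin n) (Fin n) ℝ) :
    (charmatrix A).adjugate
      = ∑ i ∈ Finset.range n, (Polynomial.X : Polynomial ℝ)^(n-1-i) • Mi A i := by
  have h1 : charmatrix A * (∑ i ∈ Finset.range n, (Polynomial.X : Polynomial ℝ)^(n-1-i) • Mi A i)
      = A.charpoly • 1 := by
    rw [key_partial A n le_rfl, charpoly_eq_q]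
    have : Mi A n = 0 := by simp [Mi, newton_dim]
    rw [this, sub_zero]
  have h2 : charmatrix A * (charmatrix A).adjugate = A.charpoly • 1 := by
    rw [Matrix.mul_adjugate]
    rfl
  have hdet : (charmatrix A).det ≠ 0 := A.charpoly_monic.ne_zero
  -- cancel
  have h3 : (charmatrix A).adjugate * (charmatrix A * (charmatrix A).adjugate)
      = (charmatrix A).adjugate * (charmatrix A * (∑ i ∈ Finset.range n, (Polynomial.X : Polynomial ℝ)^(n-1-i) • Mi A i)) := by
    rw [h1, h2]
  rw [← Matrix.mul_assoc, ← Matrix.mul_assoc, Matrix.adjugate_mul] at h3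
  refine Matrix.ext fun i j => ?_
  have h4 := congrFun (congrFun h3 i) j
  simp only [Matrix.smul_mul, Matrix.one_mul, Matrix.smul_apply, smul_eq_mul] at h4
  exact mul_left_cancel₀ hdet h4

lemma my_det_add_col_mul_row {K : Type*} [Field K] {n : ℕ}
    {B : Matrix (Fin n) (Fin n) K} (hB : IsUnit B.det) (u v : Fin n → K) :
    (B + Matrix.replicateCol (Fin 1) u * Matrix.replicateRow (Fin 1) v).det
      = B.det * (1 + Matrix.replicateRow (Fin 1) v * B⁻¹ * Matrix.replicateCol (Fin 1) u).det := by
  nth_rewrite 1 [← Matrix.mul_one B]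
  rwa [← Matrix.mul_nonsing_inv_cancel_left B (Matrix.replicateCol (Fin 1) u * Matrix.replicateRow (Fin 1) v),
    ← Matrix.mul_add, Matrix.det_mul, ← Matrix.mul_assoc, Matrix.det_one_add_mul_comm,
    ← Matrix.mul_assoc]

lemma det_rank_one_update_field {K : Type*} [Field K] {n : ℕ}
    (B : Matrix (Fin n) (Fin n) K) (hB : B.det ≠ 0) (u v : Fin n → K) :
    (B + Matrix.replicateCol (Fin 1) u * Matrix.replicateRow (Fin 1) v).det
      = B.det + v ⬝ᵥ (B.adjugate *ᵥ u) := by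
  rw [my_det_add_col_mul_row (isUnit_iff_ne_zero.2 hB), Matrix.det_fin_one]
  rw [Matrix.add_apply, Matrix.one_apply_eq, mul_add, mul_one]
  congr 1
  have hadj : B.adjugate = B.det • B⁻¹ := by
    rw [Matrix.inv_def, smul_smul, Ring.inverse_eq_inv, mul_inv_cancel₀ hB, one_smul]
  rw [hadj]
  simp only [Matrix.mul_apply, Matrix.replicateRow_apply, Matrix.replicateCol_apply, dotProduct,
    Matrix.mulVec, Matrix.smul_apply, smul_eq_mul, Finset.mul_sum, Finset.sum_mul]
  rw [Finset.sum_comm]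
  exact Finset.sum_congr rfl fun i _ => Finset.sum_congr rfl fun j _ => by ring

lemma det_rank_one_update_poly {n : ℕ} (M : Matrix (Fin n) (Fin n) (Polynomial ℝ))
    (hM : M.det ≠ 0) (u v : Fin n → Polynomial ℝ) :
    (M + Matrix.replicateCol (Fin 1) u * Matrix.replicateRow (Fin 1) v).det
      = M.det + v ⬝ᵥ (M.adjugate *ᵥ u) := by
  set f : Polynomial ℝ →+* RatFunc ℝ := (algebraMap (Polynomial ℝ) (RatFunc ℝ)) with hf
  have hinj : Function.Injective f := IsFractionRing.injective _ _
  apply hinj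
  have hmap : (M + Matrix.replicateCol (Fin 1) u * Matrix.replicateRow (Fin 1) v).map f
      = M.map f + Matrix.replicateCol (Fin 1) (f ∘ u) * Matrix.replicateRow (Fin 1) (f ∘ v) := by
    ext i j
    simp [Matrix.mul_apply, Matrix.map_apply, Fin.sum_univ_one]
  have hdet : (M.map f).det = f M.det := (RingHom.map_det f M).symm
  have hdet0 : (M.map f).det ≠ 0 := by
    rw [hdet]
    intro h
    exact hM (hinj (by simpa using h))
  have hdot : ∀ (w z : Fin n → Polynomial ℝ), f (w ⬝ᵥ z) = (f ∘ w) ⬝ᵥ (f ∘ z) := by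
    intro w z
    simp [dotProduct, map_sum]
  have hmv : ∀ (P : Matrix (Fin n) (Fin n) (Polynomial ℝ)) (z : Fin n → Polynomial ℝ),
      f ∘ (P *ᵥ z) = (P.map f) *ᵥ (f ∘ z) := by
    intro P z
    funext i
    simp [Matrix.mulVec, dotProduct, map_sum, Matrix.map_apply]
  calc f (M + Matrix.replicateCol (Fin 1) u * Matrix.replicateRow (Fin 1) v).det
      = ((M + Matrix.replicateCol (Fin 1) u * Matrix.replicateRow (Fin 1) v).map f).det := RingHom.map_det f _
    _ = (M.map f + Matrix.replicateCol (Fin 1) (f ∘ u) * Matrix.replicateRow (Fin 1) (f ∘ v)).det := by rw [hmap]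
    _ = (M.map f).det + (f ∘ v) ⬝ᵥ ((M.map f).adjugate *ᵥ (f ∘ u)) :=
        det_rank_one_update_field _ hdet0 _ _
    _ = f (M.det + v ⬝ᵥ (M.adjugate *ᵥ u)) := by
        rw [map_add, hdet, hdot, hmv]
        have : (M.adjugate).map f = (M.map f).adjugate := by
          have := RingHom.map_adjugate f M
          simpa [RingHom.mapMatrix_apply] using this
        rw [this]

lemma trace_form {n : ℕ} (T : Matrix (Fin n) (Fin n) ℝ) (X : Fin n → ℝ) :
    (Tᵀ * Matrix.vecMulVec X X).trace = X ⬝ᵥ (T *ᵥ X) := by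
  simp only [Matrix.trace, Matrix.diag, Matrix.mul_apply, Matrix.transpose_apply,
    Matrix.vecMulVec_apply, dotProduct, Matrix.mulVec, Finset.mul_sum]
  rw [Finset.sum_comm]
  exact Finset.sum_congr rfl fun i _ => Finset.sum_congr rfl fun j _ => by ring

/-- σ_k(A − X⊗X) = σ_k(A) − ⟨T_{k-1}(A), X⊗X⟩ (Frobenius inner product). -/
theorem sigma_k_rank_one_expansion {n : ℕ} (k : ℕ) (hk : 1 ≤ k)
    (A : Matrix (Fin n) (Fin n) ℝ) (hA : A.IsSymm) (X : Fin n → ℝ) :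
    esymm k (A - Matrix.vecMulVec X X) =
      esymm k A - ((newton (k - 1) A)ᵀ * Matrix.vecMulVec X X).trace := by
  rcases le_or_gt k n with hkn | hkn
  · -- main case
    have hcm : charmatrix (A - Matrix.vecMulVec X X)
        = charmatrix A + Matrix.replicateCol (Fin 1) (Polynomial.C ∘ X) * Matrix.replicateRow (Fin 1) (Polynomial.C ∘ X) := by
      ext i j
      by_cases h : i = j <;>
        simp [charmatrix_apply, Matrix.sub_apply, Matrix.mul_apply, Matrix.vecMulVec_apply, h] <;>
        ring
    have hch : (A - Matrix.vecMulVec X X).charpoly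
        = A.charpoly + (Polynomial.C ∘ X) ⬝ᵥ ((charmatrix A).adjugate *ᵥ (Polynomial.C ∘ X)) := by
      rw [Matrix.charpoly, hcm,
        det_rank_one_update_poly _ A.charpoly_monic.ne_zero]
      rfl
    have hC : ∀ (M : Matrix (Fin n) (Fin n) ℝ),
        (Polynomial.C ∘ X) ⬝ᵥ ((M.map Polynomial.C) *ᵥ (Polynomial.C ∘ X))
          = Polynomial.C (X ⬝ᵥ (M *ᵥ X)) := by
      intro M
      simp [dotProduct, Matrix.mulVec, map_sum, Finset.mul_sum, Matrix.map_apply]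
    have hdot : (Polynomial.C ∘ X) ⬝ᵥ ((charmatrix A).adjugate *ᵥ (Polynomial.C ∘ X))
        = ∑ i ∈ Finset.range n,
            Polynomial.C ((-1:ℝ)^i * (X ⬝ᵥ (newton i A *ᵥ X))) * Polynomial.X^(n-1-i) := by
      rw [key_adjugate]
      have hsum : (∑ i ∈ Finset.range n, (Polynomial.X : Polynomial ℝ)^(n-1-i) • Mi A i) *ᵥ (⇑Polynomial.C ∘ X)
          = ∑ i ∈ Finset.range n, ((Polynomial.X : Polynomial ℝ)^(n-1-i) • Mi A i) *ᵥ (⇑Polynomial.C ∘ X) := by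
        funext j
        simp only [Matrix.mulVec, dotProduct, Finset.sum_apply, Matrix.sum_apply,
          Finset.sum_mul]
        exact Finset.sum_comm
      have hdsum : ∀ (f : ℕ → Fin n → Polynomial ℝ),
          (⇑Polynomial.C ∘ X) ⬝ᵥ (∑ i ∈ Finset.range n, f i) = ∑ i ∈ Finset.range n, (⇑Polynomial.C ∘ X) ⬝ᵥ f i := by
        intro f
        simp only [dotProduct, Finset.sum_apply, Finset.mul_sum]
        exact Finset.sum_comm
      rw [hsum, hdsum]
      refine Finset.sum_congr rfl fun i _ => ?_
      rw [Matrix.smul_mulVec, dotProduct_smul, Mi, hC]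
      rw [smul_eq_mul, mul_comm]
      congr 1
      have : X ⬝ᵥ (((-1:ℝ)^i • newton i A) *ᵥ X) = (-1:ℝ)^i * (X ⬝ᵥ (newton i A *ᵥ X)) := by
        rw [Matrix.smul_mulVec, dotProduct_smul, smul_eq_mul]
      rw [this]
    have hcoeff : ((Polynomial.C ∘ X) ⬝ᵥ ((charmatrix A).adjugate *ᵥ (Polynomial.C ∘ X))).coeff (n - k)
        = (-1:ℝ)^(k-1) * (X ⬝ᵥ (newton (k-1) A *ᵥ X)) := by
      rw [hdot, Polynomial.finset_sum_coeff]
      rw [Finset.sum_eq_single (k-1)]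
      · rw [Polynomial.coeff_C_mul, Polynomial.coeff_X_pow, if_pos (by omega), mul_one]
      · intro i hi hne
        have hi' := Finset.mem_range.1 hi
        rw [Polynomial.coeff_C_mul, Polynomial.coeff_X_pow, if_neg (by omega), mul_zero]
      · intro h
        exact absurd (Finset.mem_range.2 (by omega)) h
    have hL : esymm k (A - Matrix.vecMulVec X X)
        = (-1:ℝ)^k * ((A - Matrix.vecMulVec X X).charpoly.coeff (n-k)) := by
      rw [esymm, if_pos hkn]
    rw [hL, hch, Polynomial.coeff_add, hcoeff, mul_add, esymm, if_pos hkn]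
    rw [trace_form]
    have hsign : (-1:ℝ)^k * ((-1:ℝ)^(k-1) * (X ⬝ᵥ (newton (k-1) A *ᵥ X)))
        = -(X ⬝ᵥ (newton (k-1) A *ᵥ X)) := by
      rw [← mul_assoc, ← pow_add]
      have : k + (k-1) = 2*(k-1)+1 := by omega
      rw [this, pow_succ, pow_mul]
      norm_num
    rw [hsign]
    ring
  · -- degenerate case k > n
    have h1 : esymm k (A - Matrix.vecMulVec X X) = 0 := by rw [esymm, if_neg (by omega)]
    have h2 : esymm k A = 0 := by rw [esymm, if_neg (by omega)]
    have h3 : newton (k-1) A = 0 := newton_ge A (by omega)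
    rw [h1, h2, h3]
    simp
end

section
/- Let A and B be 4×4 real symmetric matrices, each lying in the cone Γ₂⁺ (i.e., σ₁ > 0 and σ₂ > 0). Then ⟨T₁(B), A⟩² ≥ 4·σ₂(A)·σ₂(B), where T₁(B) = tr(B)·I − B and ⟨·,·⟩ is the Frobenius inner product. -/
open Matrix

noncomputable def sigma1 (A : Matrix (Fin 4) (Fin 4) ℝ) : ℝ := A.trace

noncomputable def sigma2 (A : Matrix (Fin 4) (Fin 4) ℝ) : ℝ := (A.trace ^ 2 - (A * A).trace) / 2

/-- First Newton transform `T₁(A) = tr(A)·I − A`. -/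
noncomputable def newton1 (A : Matrix (Fin 4) (Fin 4) ℝ) : Matrix (Fin 4) (Fin 4) ℝ :=
  A.trace • (1 : Matrix (Fin 4) (Fin 4) ℝ) - A

lemma key_ineq {a b p q r : ℝ} (ha : 0 < a) (hb : 0 < b)
    (hA2 : 0 < (a^2 - p)/2) (hB2 : 0 < (b^2 - q)/2)
    (h0 : 0 ≤ b^2*p - 2*a*b*r + a^2*q) :
    (a*b - r)^2 ≥ 4*((a^2 - p)/2)*((b^2 - q)/2) := by
  have h1 : a*b*(a*b - r) ≥ b^2*((a^2 - p)/2) + a^2*((b^2 - q)/2) := by nlinarith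
  have h2 : 0 ≤ b^2*((a^2 - p)/2) + a^2*((b^2 - q)/2) := by positivity
  have h3 : (a*b*(a*b - r))^2 ≥ (b^2*((a^2 - p)/2) + a^2*((b^2 - q)/2))^2 := by nlinarith
  nlinarith [sq_nonneg (b^2*((a^2 - p)/2) - a^2*((b^2 - q)/2)),
    mul_pos (mul_pos ha hb) (mul_pos ha hb), mul_pos hA2 hB2, h3]

lemma trace_mul_self_nonneg {M : Matrix (Fin 4) (Fin 4) ℝ} (hM : M.IsSymm) :
    0 ≤ (M * M).trace := by
  rw [Matrix.trace]
  apply Finset.sum_nonneg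
  intro i _
  rw [Matrix.diag_apply, Matrix.mul_apply]
  apply Finset.sum_nonneg
  intro j _
  rw [hM.apply i j]
  exact mul_self_nonneg _

/-- For 4×4 symmetric matrices A, B in Γ₂⁺, ⟨T₁(B), A⟩² ≥ 4 σ₂(A) σ₂(B). -/
theorem newton_pairing_sq_ge {A B : Matrix (Fin 4) (Fin 4) ℝ}
    (hA : A.IsSymm) (hB : B.IsSymm)
    (hA1 : 0 < sigma1 A) (hA2 : 0 < sigma2 A)
    (hB1 : 0 < sigma1 B) (hB2 : 0 < sigma2 B) :
    (newton1 B * A).trace ^ 2 ≥ 4 * sigma2 A * sigma2 B := by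
  set C : Matrix (Fin 4) (Fin 4) ℝ := B.trace • A - A.trace • B with hC
  have hCsymm : C.IsSymm := by
    unfold Matrix.IsSymm at *
    simp [hC, Matrix.transpose_sub, Matrix.transpose_smul, hA, hB]
  have h0 : 0 ≤ (C * C).trace := trace_mul_self_nonneg hCsymm
  have hexp : (C * C).trace =
      B.trace ^ 2 * (A * A).trace - 2 * A.trace * B.trace * (A * B).trace
        + A.trace ^ 2 * (B * B).trace := by
    simp only [hC, Matrix.sub_mul, Matrix.mul_sub, Matrix.smul_mul, Matrix.mul_smul,
      Matrix.trace_sub, Matrix.trace_smul, smul_eq_mul, Matrix.trace_mul_comm B A]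
    ring
  have hnewt : (newton1 B * A).trace = A.trace * B.trace - (A * B).trace := by
    simp [newton1, Matrix.sub_mul, Matrix.smul_mul, Matrix.trace_sub, Matrix.trace_smul,
      smul_eq_mul, Matrix.trace_mul_comm B A]
    ring
  rw [hnewt]
  simp only [sigma1, sigma2] at *
  rw [hexp] at h0
  exact key_ineq hA1 hB1 hA2 hB2 h0
end

section
/- Let A be a 4×4 real symmetric matrix in Γ₂⁺ (σ₁(A) > 0 and σ₂(A) > 0). Then for all vectors X, Y ∈ ℝ⁴: −T₁(A)(X,X)·T₁(A)(Y,Y) + T₁(A)(X,Y)² + σ₂(A)·(|X|²|Y|² − ⟨X,Y⟩²) ≤ 0, where T₁(A)(X,Y) = ⟨(σ₁(A)I − A)X, Y⟩. -/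
open Matrix

/-- The Newton transform as a bilinear form: `T₁(A)(X,Y) = ⟨T₁(A)X, Y⟩`. -/
noncomputable def newton1Form (A : Matrix (Fin 4) (Fin 4) ℝ) (X Y : Fin 4 → ℝ) : ℝ :=
  (newton1 A).mulVec X ⬝ᵥ Y

private lemma quad_nonneg (a b : ℝ) : 0 ≤ a ^ 2 + a * b + b ^ 2 := by
  nlinarith [sq_nonneg (a + b), sq_nonneg a, sq_nonneg b]

private lemma dot_transform {U : Matrix (Fin 4) (Fin 4) ℝ} (h : U * Uᵀ = 1)
    (v w : Fin 4 → ℝ) : (Uᵀ *ᵥ v) ⬝ᵥ (Uᵀ *ᵥ w) = v ⬝ᵥ w := by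
  rw [dotProduct_comm, dotProduct_mulVec, vecMul_transpose, mulVec_mulVec, h, one_mulVec,
    dotProduct_comm]

private lemma dot_A_transform {U : Matrix (Fin 4) (Fin 4) ℝ} (_h : U * Uᵀ = 1)
    (D : Matrix (Fin 4) (Fin 4) ℝ) (v w : Fin 4 → ℝ) :
    ((U * D * Uᵀ) *ᵥ v) ⬝ᵥ w = (D *ᵥ (Uᵀ *ᵥ v)) ⬝ᵥ (Uᵀ *ᵥ w) := by
  have h1 : (U * D * Uᵀ) *ᵥ v = U *ᵥ (D *ᵥ (Uᵀ *ᵥ v)) := by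
    simp only [mulVec_mulVec, Matrix.mul_assoc]
  rw [h1, dotProduct_comm, dotProduct_mulVec, ← mulVec_transpose, dotProduct_comm]

set_option maxHeartbeats 1000000 in
/-- For A ∈ Γ₂⁺ and all X, Y:
−T₁(X,X)T₁(Y,Y) + T₁(X,Y)² + σ₂(A)(|X|²|Y|² − ⟨X,Y⟩²) ≤ 0. -/
theorem newton_curvature_inequality {A : Matrix (Fin 4) (Fin 4) ℝ}
    (hA : A.IsSymm) (hA1 : 0 < sigma1 A) (hA2 : 0 < sigma2 A)
    (X Y : Fin 4 → ℝ) :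
    -newton1Form A X X * newton1Form A Y Y + newton1Form A X Y ^ 2 +
      sigma2 A * ((X ⬝ᵥ X) * (Y ⬝ᵥ Y) - (X ⬝ᵥ Y) ^ 2) ≤ 0 := by
  have hH : A.IsHermitian := by
    rwa [Matrix.IsHermitian, conjTranspose_eq_transpose_of_trivial]
  set U : Matrix (Fin 4) (Fin 4) ℝ := (hH.eigenvectorUnitary : Matrix (Fin 4) (Fin 4) ℝ)
    with hUdef
  set d : Fin 4 → ℝ := hH.eigenvalues with hddef
  have hsU : star U = Uᵀ := by
    rw [Matrix.star_eq_conjTranspose, conjTranspose_eq_transpose_of_trivial]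
  have hUU : U * Uᵀ = 1 := by
    rw [← hsU]; exact (Matrix.mem_unitaryGroup_iff).mp hH.eigenvectorUnitary.2
  have hUU' : Uᵀ * U = 1 := by rwa [mul_eq_one_comm] at hUU
  have hdiag : (Matrix.diagonal (RCLike.ofReal ∘ d) : Matrix (Fin 4) (Fin 4) ℝ)
      = Matrix.diagonal d := by
    congr 1
  have hAeq : A = U * Matrix.diagonal d * Uᵀ := by
    have := hH.spectral_theorem
    rwa [Unitary.conjStarAlgAut_apply, ← hUdef, ← hddef, hsU, hdiag] at this
  set x : Fin 4 → ℝ := Uᵀ *ᵥ X with hx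
  set y : Fin 4 → ℝ := Uᵀ *ᵥ Y with hy
  -- trace computations
  have htr : A.trace = ∑ i, d i := by
    rw [hAeq, Matrix.trace_mul_cycle, hUU', Matrix.one_mul, Matrix.trace_diagonal]
  have htr2 : (A * A).trace = ∑ i, d i ^ 2 := by
    have : A * A = U * (Matrix.diagonal d * Matrix.diagonal d) * Uᵀ := by
      rw [hAeq]
      rw [show U * Matrix.diagonal d * Uᵀ * (U * Matrix.diagonal d * Uᵀ)
          = U * (Matrix.diagonal d * (Uᵀ * U) * Matrix.diagonal d) * Uᵀ from by
        simp only [Matrix.mul_assoc]]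
      rw [hUU']
      simp [Matrix.mul_assoc]
    rw [this, Matrix.trace_mul_cycle, hUU', Matrix.one_mul,
      Matrix.diagonal_mul_diagonal, Matrix.trace_diagonal]
    simp [sq]
  -- dot product computations
  have hdXY : X ⬝ᵥ Y = x ⬝ᵥ y := (dot_transform hUU X Y).symm
  have hdXX : X ⬝ᵥ X = x ⬝ᵥ x := (dot_transform hUU X X).symm
  have hdYY : Y ⬝ᵥ Y = y ⬝ᵥ y := (dot_transform hUU Y Y).symm
  have hform : ∀ v w : Fin 4 → ℝ,
      newton1Form A v w = A.trace * ((Uᵀ *ᵥ v) ⬝ᵥ (Uᵀ *ᵥ w))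
        - (Matrix.diagonal d *ᵥ (Uᵀ *ᵥ v)) ⬝ᵥ (Uᵀ *ᵥ w) := by
    intro v w
    rw [newton1Form, newton1, Matrix.sub_mulVec, sub_dotProduct,
      Matrix.smul_mulVec, Matrix.one_mulVec, smul_dotProduct,
      dot_transform hUU, smul_eq_mul]
    rw [show A *ᵥ v ⬝ᵥ w = (Matrix.diagonal d *ᵥ (Uᵀ *ᵥ v)) ⬝ᵥ (Uᵀ *ᵥ w) from by
      rw [hAeq]; exact dot_A_transform hUU (Matrix.diagonal d) v w]
  rw [hform X X, hform X Y, hform Y Y, hdXY, hdXX, hdYY, sigma2, htr, htr2, ← hx, ← hy]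
  simp only [Matrix.mulVec_diagonal, dotProduct, Fin.sum_univ_four,
    Matrix.mulVec_diagonal]
  nlinarith [mul_nonneg (quad_nonneg (d 2) (d 3)) (sq_nonneg (x 0 * y 1 - x 1 * y 0)),
    mul_nonneg (quad_nonneg (d 1) (d 3)) (sq_nonneg (x 0 * y 2 - x 2 * y 0)),
    mul_nonneg (quad_nonneg (d 1) (d 2)) (sq_nonneg (x 0 * y 3 - x 3 * y 0)),
    mul_nonneg (quad_nonneg (d 0) (d 3)) (sq_nonneg (x 1 * y 2 - x 2 * y 1)),
    mul_nonneg (quad_nonneg (d 0) (d 2)) (sq_nonneg (x 1 * y 3 - x 3 * y 1)),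
    mul_nonneg (quad_nonneg (d 0) (d 1)) (sq_nonneg (x 2 * y 3 - x 3 * y 2))]
end

section
/- Let A be a 4×4 real symmetric matrix. Then −2A² + σ₁(A)·A + σ₁(A)²·I ≥ 3σ₂(A)·I as quadratic forms; equivalently, (2A + σ₁(A)I)·(σ₁(A)I − A) ≥ 3σ₂(A)·I. -/
open Matrix

lemma ricci_newton_scalar (d : Fin 4 → ℝ) (j : Fin 4) :
    0 ≤ -2 * d j ^ 2 + (d 0 + d 1 + d 2 + d 3) * d j + (d 0 + d 1 + d 2 + d 3) ^ 2
      - 3 * (((d 0 + d 1 + d 2 + d 3) ^ 2 - (d 0 ^ 2 + d 1 ^ 2 + d 2 ^ 2 + d 3 ^ 2)) / 2) := by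
  have h2 : (⟨2, by norm_num⟩ : Fin 4) = 2 := rfl
  have h3 : (⟨3, by norm_num⟩ : Fin 4) = 3 := rfl
  fin_cases j <;> simp only [Fin.isValue, Fin.zero_eta, Fin.mk_one, h2, h3] <;>
    nlinarith [sq_nonneg (d 1 - d 2), sq_nonneg (d 1 - d 3), sq_nonneg (d 2 - d 3),
      sq_nonneg (d 0 - d 2), sq_nonneg (d 0 - d 3), sq_nonneg (d 0 - d 1)]

/-- For a 4×4 symmetric matrix A,
−2A² + σ₁(A)A + σ₁(A)²I − 3σ₂(A)I is positive semidefinite. -/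
theorem ricci_newton_lower_bound {A : Matrix (Fin 4) (Fin 4) ℝ} (hA : A.IsSymm) :
    ((-2 : ℝ) • (A * A) + sigma1 A • A + (sigma1 A ^ 2) • (1 : Matrix (Fin 4) (Fin 4) ℝ)
      - (3 * sigma2 A) • (1 : Matrix (Fin 4) (Fin 4) ℝ)).PosSemidef := by
  have hH : A.IsHermitian := by
    rw [Matrix.IsHermitian, conjTranspose_eq_transpose_of_trivial]
    exact hA
  set d : Fin 4 → ℝ := hH.eigenvalues with hd
  set U : Matrix (Fin 4) (Fin 4) ℝ := (hH.eigenvectorUnitary : Matrix (Fin 4) (Fin 4) ℝ) with hU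
  have hUU : star U * U = 1 := Unitary.coe_star_mul_self _
  have hUU' : U * star U = 1 := Unitary.coe_mul_star_self _
  have hspec : A = U * diagonal d * star U := by
    have h := hH.spectral_theorem
    have : (RCLike.ofReal ∘ hH.eigenvalues : Fin 4 → ℝ) = d := by
      ext i; simp [hd]
    rwa [this] at h
  have htr : ∀ e : Fin 4 → ℝ, (U * diagonal e * star U).trace = ∑ i, e i := by
    intro e
    rw [trace_mul_cycle, hUU, one_mul, trace_diagonal]
  set s : ℝ := sigma1 A with hs
  set σ : ℝ := sigma2 A with hσ
  have hAA : A * A = U * diagonal (fun i => d i ^ 2) * star U := by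
    calc A * A = (U * diagonal d * star U) * (U * diagonal d * star U) := by rw [← hspec]
      _ = U * (diagonal d * (star U * U) * diagonal d) * star U := by
          simp only [mul_assoc]
      _ = U * diagonal (fun i => d i ^ 2) * star U := by
          rw [hUU, mul_one, diagonal_mul_diagonal]
          congr 1
          ext i
          ring
  have hsum : s = ∑ i, d i := by
    rw [hs, sigma1, hspec, htr]
  have hq : (A * A).trace = ∑ i, d i ^ 2 := by rw [hAA, htr]
  have hσq : σ = (s ^ 2 - ∑ i, d i ^ 2) / 2 := by
    rw [hσ, sigma2, hq, hs]
    rfl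
  set g : Fin 4 → ℝ := fun i => -2 * d i ^ 2 + s * d i + s ^ 2 - 3 * σ with hg
  have hdg : diagonal g = (-2 : ℝ) • diagonal (fun i => d i ^ 2) + s • diagonal d
      + (s ^ 2 - 3 * σ) • (1 : Matrix (Fin 4) (Fin 4) ℝ) := by
    ext i j
    rcases eq_or_ne i j with h | h
    · subst h
      simp only [Matrix.diagonal_apply_eq, Matrix.add_apply, Matrix.smul_apply,
        Matrix.one_apply_eq, smul_eq_mul, hg]
      ring
    · simp [Matrix.diagonal_apply_ne _ h, Matrix.one_apply_ne h]
  have hM : ((-2 : ℝ) • (A * A) + s • A + (s ^ 2) • (1 : Matrix (Fin 4) (Fin 4) ℝ)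
      - (3 * σ) • (1 : Matrix (Fin 4) (Fin 4) ℝ)) = U * diagonal g * star U := by
    rw [hdg]
    simp only [Matrix.add_mul, Matrix.mul_add, Matrix.smul_mul, Matrix.mul_smul, Matrix.mul_one]
    rw [← hAA, ← hspec, hUU']
    rw [sub_smul]
    abel
  rw [hM]
  refine PosSemidef.mul_mul_conjTranspose_same ?_ U
  refine posSemidef_diagonal_iff.mpr fun i => ?_
  rw [hg]
  rw [hσq, Fin.sum_univ_four] at *
  rw [hsum]
  exact ricci_newton_scalar d i
end

section
/- Let A be a 4×4 real symmetric matrix with σ₁(A) > 0 and σ₂(A) > 0. Then Ric := 2A + σ₁(A)·I is positive definite, and 3·Ric⁻¹ ≤ σ₂(A)⁻¹·T₁(A) as quadratic forms, i.e., for every vector X, 3⟨Ric⁻¹X, X⟩ ≤ σ₂(A)⁻¹⟨T₁(A)X, X⟩. -/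
open Matrix

/-- If A is 4×4 symmetric with σ₁(A) > 0 and σ₂(A) > 0, then `Ric := 2A + σ₁(A)·I`
is positive definite, and 3·Ric⁻¹ ≤ σ₂(A)⁻¹·T₁(A) as quadratic forms. -/
theorem ricci_inverse_newton_bound {A : Matrix (Fin 4) (Fin 4) ℝ}
    (hA : A.IsSymm) (h1 : 0 < sigma1 A) (h2 : 0 < sigma2 A) :
    ((2 : ℝ) • A + sigma1 A • (1 : Matrix (Fin 4) (Fin 4) ℝ)).PosDef ∧
    ∀ X : Fin 4 → ℝ,
      3 * (((2 : ℝ) • A + sigma1 A • (1 : Matrix (Fin 4) (Fin 4) ℝ))⁻¹.mulVec X ⬝ᵥ X) ≤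
        (sigma2 A)⁻¹ * ((newton1 A).mulVec X ⬝ᵥ X) := by
  classical
  have hH : A.IsHermitian := by
    rw [Matrix.IsHermitian, conjTranspose_eq_transpose_of_trivial]; exact hA
  set U : Matrix (Fin 4) (Fin 4) ℝ := (hH.eigenvectorUnitary : Matrix (Fin 4) (Fin 4) ℝ) with hUdef
  set lam : Fin 4 → ℝ := hH.eigenvalues with hlamdef
  set c : ℝ := sigma1 A with hcdef
  have hstarU : star U = Uᵀ := by
    rw [Matrix.star_eq_conjTranspose, conjTranspose_eq_transpose_of_trivial]
  have hUU : U * Uᵀ = 1 := by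
    rw [← hstarU]
    exact (Matrix.mem_unitaryGroup_iff).mp hH.eigenvectorUnitary.2
  have hUU' : Uᵀ * U = 1 := by
    rw [← hstarU]
    exact (Matrix.mem_unitaryGroup_iff').mp hH.eigenvectorUnitary.2
  have hspec : A = U * diagonal lam * Uᵀ := by
    have := hH.spectral_theorem
    rwa [Unitary.conjStarAlgAut_apply, hstarU] at this
  -- conjugation multiplies diagonals
  have hconjmul : ∀ d e : Fin 4 → ℝ,
      (U * diagonal d * Uᵀ) * (U * diagonal e * Uᵀ)
        = U * diagonal (fun i => d i * e i) * Uᵀ := by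
    intro d e
    have : (U * diagonal d * Uᵀ) * (U * diagonal e * Uᵀ)
        = U * (diagonal d * (Uᵀ * U) * diagonal e) * Uᵀ := by
      simp only [Matrix.mul_assoc]
    rw [this, hUU', mul_one, diagonal_mul_diagonal]
  have htrconj : ∀ d : Fin 4 → ℝ, (U * diagonal d * Uᵀ).trace = ∑ i, d i := by
    intro d
    rw [Matrix.trace_mul_cycle, hUU', Matrix.one_mul, Matrix.trace_diagonal]
  have htr : A.trace = ∑ i, lam i := by rw [hspec, htrconj]
  have htr2 : (A * A).trace = ∑ i, lam i ^ 2 := by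
    rw [hspec, hconjmul, htrconj]
    exact Finset.sum_congr rfl fun i _ => (sq (lam i)).symm
  have hsig2 : sigma2 A = ((∑ i, lam i) ^ 2 - ∑ i, lam i ^ 2) / 2 := by
    rw [sigma2, htr, htr2]
  have hc : c = ∑ i, lam i := by rw [hcdef, sigma1, htr]
  -- key scalar inequality
  have kineq : ∀ i, 3 * sigma2 A ≤ (c - lam i) * (2 * lam i + c) := by
    intro i
    have hcard : (Finset.univ.erase i).card = 3 := by
      rw [Finset.card_erase_of_mem (Finset.mem_univ i)]; simp
    have hcs := sq_sum_le_card_mul_sum_sq (s := Finset.univ.erase i) (f := lam)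
    rw [hcard] at hcs
    push_cast at hcs
    have hs' : ∑ j ∈ Finset.univ.erase i, lam j = (∑ j, lam j) - lam i := by
      have := Finset.sum_erase_add Finset.univ lam (Finset.mem_univ i); linarith
    have hq' : ∑ j ∈ Finset.univ.erase i, lam j ^ 2 = (∑ j, lam j ^ 2) - lam i ^ 2 := by
      have := Finset.sum_erase_add Finset.univ (fun j => lam j ^ 2) (Finset.mem_univ i)
      linarith
    rw [hs', hq'] at hcs
    rw [hsig2, hc]
    nlinarith [hcs]
  have kpos : ∀ i, 0 < 2 * lam i + c := by
    intro i
    by_contra hle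
    push_neg at hle
    have h3 : 0 ≤ c - lam i := by nlinarith [h1]
    nlinarith [kineq i, h2, mul_nonpos_of_nonneg_of_nonpos h3 hle]
  -- quadratic form of a conjugated diagonal
  have hform : ∀ (d : Fin 4 → ℝ) (X : Fin 4 → ℝ),
      ((U * diagonal d * Uᵀ) *ᵥ X) ⬝ᵥ X = ∑ i, d i * ((Uᵀ *ᵥ X) i) ^ 2 := by
    intro d X
    rw [dotProduct_comm, ← Matrix.mulVec_mulVec, ← Matrix.mulVec_mulVec,
      Matrix.dotProduct_mulVec, ← Matrix.mulVec_transpose]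
    simp only [dotProduct, Matrix.mulVec_diagonal]
    exact Finset.sum_congr rfl fun i _ => by ring
  -- Ric decomposition
  have hdiag : (2 : ℝ) • diagonal lam + c • (1 : Matrix (Fin 4) (Fin 4) ℝ)
      = diagonal (fun i => 2 * lam i + c) := by
    ext i j
    by_cases h : i = j <;>
      simp [h, Matrix.diagonal_apply_eq, Matrix.diagonal_apply_ne, Matrix.one_apply]
  have hRic : (2 : ℝ) • A + c • (1 : Matrix (Fin 4) (Fin 4) ℝ)
      = U * diagonal (fun i => 2 * lam i + c) * Uᵀ := by
    rw [← hdiag, Matrix.mul_add, Matrix.add_mul, mul_smul_comm, smul_mul_assoc,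
      mul_smul_comm, smul_mul_assoc, Matrix.mul_one, hUU, ← hspec]
  have hT1 : newton1 A = U * diagonal (fun i => c - lam i) * Uᵀ := by
    have hdiag2 : c • (1 : Matrix (Fin 4) (Fin 4) ℝ) - diagonal lam
        = diagonal (fun i => c - lam i) := by
      ext i j
      by_cases h : i = j <;>
        simp [h, Matrix.diagonal_apply_eq, Matrix.diagonal_apply_ne, Matrix.one_apply]
    have hct : A.trace = c := by rw [hcdef, sigma1]
    rw [newton1, hct]
    rw [← hdiag2, Matrix.mul_sub, Matrix.sub_mul, mul_smul_comm, smul_mul_assoc,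
      Matrix.mul_one, hUU, ← hspec]
  -- inverse of Ric
  have hRicInv : ((2 : ℝ) • A + c • (1 : Matrix (Fin 4) (Fin 4) ℝ))⁻¹
      = U * diagonal (fun i => (2 * lam i + c)⁻¹) * Uᵀ := by
    apply Matrix.inv_eq_right_inv
    rw [hRic, hconjmul]
    have : (fun i => (2 * lam i + c) * (2 * lam i + c)⁻¹) = fun _ => (1 : ℝ) := by
      funext i; exact mul_inv_cancel₀ (kpos i).ne'
    rw [this, Matrix.diagonal_one, Matrix.mul_one, hUU]
  constructor
  · refine Matrix.posDef_iff_dotProduct_mulVec.mpr ⟨?_, ?_⟩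
    · rw [Matrix.IsHermitian, conjTranspose_eq_transpose_of_trivial,
        Matrix.transpose_add, Matrix.transpose_smul, Matrix.transpose_smul,
        Matrix.transpose_one, hA]
    · intro x hx
      have hstar : star x = x := by simp
      rw [hstar, dotProduct_comm, hRic, hform]
      set Y : Fin 4 → ℝ := Uᵀ *ᵥ x with hY
      have hYne : Y ≠ 0 := by
        intro hY0
        apply hx
        have : (U * Uᵀ) *ᵥ x = U *ᵥ Y := by rw [← Matrix.mulVec_mulVec]
        rw [hUU, Matrix.one_mulVec] at this
        rw [this, hY0, Matrix.mulVec_zero]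
      obtain ⟨i0, hi0⟩ := Function.ne_iff.mp hYne
      refine Finset.sum_pos' (fun i _ => mul_nonneg (kpos i).le (sq_nonneg _)) ⟨i0, Finset.mem_univ i0, ?_⟩
      have hYi : Y i0 ≠ 0 := by simpa using hi0
      exact mul_pos (kpos i0) (by positivity)
  · intro X
    rw [hRicInv, hT1, hform, hform, Finset.mul_sum, Finset.mul_sum]
    apply Finset.sum_le_sum
    intro i _
    have hb := kpos i
    have hcoef : 3 * (2 * lam i + c)⁻¹ ≤ (sigma2 A)⁻¹ * (c - lam i) := by
      rw [← div_eq_mul_inv, mul_comm ((sigma2 A)⁻¹) (c - lam i), ← div_eq_mul_inv, div_le_div_iff₀ hb h2]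
      nlinarith [kineq i]
    nlinarith [mul_le_mul_of_nonneg_right hcoef (sq_nonneg ((Uᵀ *ᵥ X) i))]
end

section
/- Let A and B be n×n real symmetric matrices, each with σ₁ > 0 and σ₂ > 0. Then the polarized second symmetric function Σ(A,B) := σ₁(A)·σ₁(B) − ⟨A,B⟩ is strictly positive, where ⟨A,B⟩ = tr(AB). -/
open Matrix

/-- For n×n symmetric A, B each with σ₁ > 0 and σ₂ > 0, the polarized second
symmetric function Σ(A,B) = tr(A)tr(B) − tr(AB) is strictly positive. -/
theorem polarized_sigma2_pos {n : ℕ} {A B : Matrix (Fin n) (Fin n) ℝ}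
    (hA : A.IsSymm) (hB : B.IsSymm)
    (hA1 : 0 < A.trace) (hA2 : 0 < (A.trace ^ 2 - (A * A).trace) / 2)
    (hB1 : 0 < B.trace) (hB2 : 0 < (B.trace ^ 2 - (B * B).trace) / 2) :
    0 < A.trace * B.trace - (A * B).trace := by
  have htrAB : (A * B).trace = ∑ p : Fin n × Fin n, A p.1 p.2 * B p.1 p.2 := by
    rw [Fintype.sum_prod_type]
    simp [Matrix.trace, Matrix.diag, Matrix.mul_apply, hB.apply]
  have htrAA : (A * A).trace = ∑ p : Fin n × Fin n, A p.1 p.2 ^ 2 := by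
    rw [Fintype.sum_prod_type]
    simp [Matrix.trace, Matrix.diag, Matrix.mul_apply, hA.apply, sq]
  have htrBB : (B * B).trace = ∑ p : Fin n × Fin n, B p.1 p.2 ^ 2 := by
    rw [Fintype.sum_prod_type]
    simp [Matrix.trace, Matrix.diag, Matrix.mul_apply, hB.apply, sq]
  have hcs := Finset.sum_mul_sq_le_sq_mul_sq Finset.univ
    (fun p : Fin n × Fin n => A p.1 p.2) (fun p : Fin n × Fin n => B p.1 p.2)
  have hsA : (0:ℝ) ≤ ∑ p : Fin n × Fin n, A p.1 p.2 ^ 2 :=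
    Finset.sum_nonneg fun p _ => sq_nonneg _
  have hsB : (0:ℝ) ≤ ∑ p : Fin n × Fin n, B p.1 p.2 ^ 2 :=
    Finset.sum_nonneg fun p _ => sq_nonneg _
  rw [htrAA] at hA2
  rw [htrBB] at hB2
  rw [htrAB]
  have hprod : (∑ p : Fin n × Fin n, A p.1 p.2 ^ 2) * ∑ p : Fin n × Fin n, B p.1 p.2 ^ 2
      < A.trace ^ 2 * B.trace ^ 2 := by nlinarith
  nlinarith [hcs, hprod, mul_pos hA1 hB1,
    sq_nonneg (A.trace * B.trace + ∑ p : Fin n × Fin n, A p.1 p.2 * B p.1 p.2)]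
end

section
/- Let A, B, C be n×n real symmetric matrices such that A − B is positive definite and C has σ₁(C) > 0 and σ₂(C) > 0. Then Σ(B,C) < Σ(A,C), where Σ(X,Y) = tr(X)tr(Y) − tr(XY). -/
open Matrix

private lemma herm_of_symm {n : ℕ} {M : Matrix (Fin n) (Fin n) ℝ} (h : M.IsSymm) :
    M.IsHermitian := by
  rw [IsHermitian, conjTranspose_eq_transpose_of_trivial]; exact h

/-- Unitary conjugation preserves positive definiteness. -/
private lemma posDef_unitary_conj {n : ℕ} {N U : Matrix (Fin n) (Fin n) ℝ}
    (hN : N.PosDef) (hU : U ∈ Matrix.unitaryGroup (Fin n) ℝ) :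
    (U * N * Uᴴ).PosDef := by
  have hUU : U * Uᴴ = 1 := (Matrix.mem_unitaryGroup_iff).mp hU
  refine Matrix.PosDef.of_dotProduct_mulVec_pos ?_ (fun x hx => ?_)
  · simpa using Matrix.isHermitian_conjTranspose_mul_mul Uᴴ hN.isHermitian
  · have hx' : Uᴴ *ᵥ x ≠ 0 := by
      intro h0
      apply hx
      have : U *ᵥ (Uᴴ *ᵥ x) = x := by
        rw [mulVec_mulVec, hUU, one_mulVec]
      rw [h0, mulVec_zero] at this
      exact this.symm
    have := hN.dotProduct_mulVec_pos hx'
    simpa only [star_mulVec, dotProduct_mulVec, vecMul_vecMul, conjTranspose_conjTranspose,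
      mul_assoc] using this

/-- Diagonal entries of a positive definite matrix are positive. -/
private lemma posDef_diag_pos {n : ℕ} {N : Matrix (Fin n) (Fin n) ℝ} (hN : N.PosDef) (i : Fin n) :
    0 < N i i := by
  have := hN.dotProduct_mulVec_pos (x := Pi.single i 1) (by simp [Function.ne_iff])
  simpa [dotProduct, Pi.single_apply, mulVec, Finset.sum_ite_eq] using this

/-- If A − B is positive definite and C ∈ Γ₂⁺, then Σ(B,C) < Σ(A,C), where
Σ(X,Y) = tr(X)tr(Y) − tr(XY). -/
theorem polarized_sigma2_monotone {n : ℕ} {A B C : Matrix (Fin n) (Fin n) ℝ}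
    (hA : A.IsSymm) (hB : B.IsSymm) (hC : C.IsSymm)
    (hAB : (A - B).PosDef)
    (hC1 : 0 < C.trace) (hC2 : 0 < (C.trace ^ 2 - (C * C).trace) / 2) :
    B.trace * C.trace - (B * C).trace < A.trace * C.trace - (A * C).trace := by
  classical
  have hC' : C.IsHermitian := herm_of_symm hC
  set U : Matrix (Fin n) (Fin n) ℝ := (hC'.eigenvectorUnitary : Matrix (Fin n) (Fin n) ℝ) with hUdef
  have hUmem : U ∈ Matrix.unitaryGroup (Fin n) ℝ := hC'.eigenvectorUnitary.2
  have hUU : U * Uᴴ = 1 := (Matrix.mem_unitaryGroup_iff).mp hUmem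
  have hUU' : Uᴴ * U = 1 := (Matrix.mem_unitaryGroup_iff').mp hUmem
  set lam : Fin n → ℝ := hC'.eigenvalues with hlam
  have hspec : C = U * diagonal lam * Uᴴ := by
    have := hC'.spectral_theorem
    simpa [Function.comp, Matrix.star_eq_conjTranspose, hUdef, hlam] using this
  -- trace C = sum of eigenvalues
  have htr : C.trace = ∑ i, lam i := by
    rw [hspec, trace_mul_cycle, hUU', one_mul, trace_diagonal]

  -- trace (C*C) = sum of squares
  have htr2 : (C * C).trace = ∑ i, lam i ^ 2 := by
    have hCC : C * C = U * (diagonal lam * diagonal lam) * Uᴴ := by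
      rw [hspec]
      rw [show U * diagonal lam * Uᴴ * (U * diagonal lam * Uᴴ)
          = U * (diagonal lam * (Uᴴ * U) * diagonal lam) * Uᴴ by noncomm_ring]
      rw [hUU', mul_one]
    rw [hCC, trace_mul_cycle, hUU', one_mul, diagonal_mul_diagonal, trace_diagonal]
    simp [pow_two]
  -- each eigenvalue is less than the trace
  have hlt : ∀ i, lam i < C.trace := by
    intro i
    by_contra hcon
    push_neg at hcon
    have h1 : C.trace ^ 2 ≤ lam i ^ 2 := by
      have : 0 < lam i := lt_of_lt_of_le hC1 hcon
      nlinarith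
    have h2 : lam i ^ 2 ≤ ∑ j, lam j ^ 2 :=
      Finset.single_le_sum (fun j _ => sq_nonneg (lam j)) (Finset.mem_univ i)
    rw [← htr2] at h2
    linarith
  -- M = trace C • 1 - C is positive definite
  set M : Matrix (Fin n) (Fin n) ℝ := C.trace • (1 : Matrix (Fin n) (Fin n) ℝ) - C with hMdef
  have hMspec : M = U * diagonal (fun i => C.trace - lam i) * Uᴴ := by
    have hdiag : diagonal (fun i => C.trace - lam i)
        = C.trace • (1 : Matrix (Fin n) (Fin n) ℝ) - diagonal lam := by
      ext i j
      by_cases h : i = j <;> simp [Matrix.diagonal_apply, h, Matrix.one_apply]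
    rw [hMdef, hdiag, mul_sub, sub_mul, ← hspec]
    congr 1
    rw [mul_smul_comm, smul_mul_assoc, mul_one, hUU]
  have hMpos : M.PosDef := by
    rw [hMspec]
    exact posDef_unitary_conj (Matrix.PosDef.diagonal (fun i => sub_pos.mpr (hlt i))) hUmem
  -- spectral decomposition of D = A - B
  set D : Matrix (Fin n) (Fin n) ℝ := A - B with hDdef
  have hD' : D.IsHermitian := hAB.isHermitian
  set V : Matrix (Fin n) (Fin n) ℝ := (hD'.eigenvectorUnitary : Matrix (Fin n) (Fin n) ℝ) with hVdef
  have hVmem : V ∈ Matrix.unitaryGroup (Fin n) ℝ := hD'.eigenvectorUnitary.2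
  have hVstar : Vᴴ ∈ Matrix.unitaryGroup (Fin n) ℝ := by
    rw [show Vᴴ = star V from rfl]
    exact Unitary.star_mem hVmem
  set mu : Fin n → ℝ := hD'.eigenvalues with hmu
  have hDspec : D = V * diagonal mu * Vᴴ := by
    have := hD'.spectral_theorem
    simpa [Function.comp, Matrix.star_eq_conjTranspose, hVdef, hmu] using this
  have hmupos : ∀ i, 0 < mu i := fun i => hAB.eigenvalues_pos i
  -- N = Vᴴ * M * V is positive definite
  set N : Matrix (Fin n) (Fin n) ℝ := Vᴴ * M * V with hNdef
  have hNpos : N.PosDef := by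
    have := posDef_unitary_conj hMpos hVstar
    simpa [hNdef] using this
  -- trace (D * M) = ∑ mu i * N i i > 0
  have htrDM : (D * M).trace = ∑ i, mu i * N i i := by
    rw [hDspec, hNdef]
    rw [show V * diagonal mu * Vᴴ * M = V * (diagonal mu * (Vᴴ * M)) by noncomm_ring]
    rw [trace_mul_comm]
    rw [show diagonal mu * (Vᴴ * M) * V = diagonal mu * (Vᴴ * M * V) by noncomm_ring]
    simp [Matrix.trace, Matrix.diag, diagonal_mul]
  have hNonempty : Nonempty (Fin n) := by
    by_contra hne
    rw [not_nonempty_iff] at hne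
    have : C.trace = 0 := by
      rw [Matrix.trace]
      exact Finset.sum_of_isEmpty _
    linarith
  have hpos : 0 < (D * M).trace := by
    rw [htrDM]
    exact Finset.sum_pos (fun i _ => mul_pos (hmupos i) (posDef_diag_pos hNpos i))
      Finset.univ_nonempty
  -- unfold and conclude
  have h1 : ∀ X : Matrix (Fin n) (Fin n) ℝ,
      (X * M).trace = X.trace * C.trace - (X * C).trace := by
    intro X
    rw [hMdef, mul_sub, trace_sub, Matrix.mul_smul, Matrix.mul_one, trace_smul, smul_eq_mul,
      mul_comm]
  have hexpand : (D * M).trace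
      = (A.trace - B.trace) * C.trace - ((A * C).trace - (B * C).trace) := by
    rw [hDdef, sub_mul, trace_sub, h1 A, h1 B]
    ring
  rw [hexpand] at hpos
  linarith
end
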